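/- arXiv:2205.06781 — 3 statements merged into one kernel-verified Lean document; each statement's English description precedes it below -/
import Mathlib

section
/- Let q ≥ 2 and n be natural numbers, let φ be a subset of {0,...,n-1} with 2 · |φ| ≤ q - 1, and let w : Fin n → ZMod q be any vector. Then there exists z₀ ∈ ZMod q such that for every i ∈ φ the masked symbol c_i := w i - z₀ satisfies c_i ≠ 0 and c_i ≠ -1; consequently, for every i ∈ φ and every e ∈ {0, 1} ⊆ ZMod q, one has c_i + e ≠ 0. -/
/-- Masking guarantee of Theorem 1: if `2 * |φ| ≤ q - 1`, then for any
`w : Fin n → ZMod q` there is `z₀` such that the masked symbols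
`c_i = w i - z₀` at positions `i ∈ φ` avoid `0` and `-1`; consequently
`c_i + e ≠ 0` for every error value `e ∈ {0, 1}`. -/
theorem exists_masking_shift (q n : ℕ) (hq : 2 ≤ q) (φ : Finset (Fin n))
    (hφ : 2 * φ.card ≤ q - 1) (w : Fin n → ZMod q) :
    ∃ z₀ : ZMod q, ∀ i ∈ φ,
      (w i - z₀ ≠ 0 ∧ w i - z₀ ≠ -1) ∧
      ∀ e : ZMod q, (e = 0 ∨ e = 1) → (w i - z₀) + e ≠ 0 := by
  haveI : NeZero q := ⟨by omega⟩
  set B : Finset (ZMod q) := φ.image w ∪ φ.image (fun i => w i + 1) with hB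
  have hcard : B.card < q := by
    calc B.card ≤ (φ.image w).card + (φ.image (fun i => w i + 1)).card :=
          Finset.card_union_le _ _
      _ ≤ φ.card + φ.card := by
          gcongr <;> exact Finset.card_image_le
      _ ≤ q - 1 := by omega
      _ < q := by omega
  have : ∃ z₀ : ZMod q, z₀ ∉ B := by
    by_contra h
    push_neg at h
    have : (Finset.univ : Finset (ZMod q)) ⊆ B := fun x _ => h x
    have := Finset.card_le_card this
    simp [ZMod.card] at this
    omega
  obtain ⟨z₀, hz⟩ := this
  simp only [hB, Finset.mem_union, Finset.mem_image, not_or, not_exists, not_and] at hz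
  refine ⟨z₀, fun i hi => ?_⟩
  have h1 : w i - z₀ ≠ 0 := fun h => hz.1 i hi (by linear_combination h)
  have h2 : w i - z₀ ≠ -1 := fun h => hz.2 i hi (by linear_combination h)
  refine ⟨⟨h1, h2⟩, fun e he => ?_⟩
  rcases he with rfl | rfl
  · simpa using h1
  · intro h; exact h2 (by linear_combination h)
end

section
/- Let q ≥ 2 and m be natural numbers with 2m < q. Let h : Fin m → ZMod q be such that each h j is invertible in ZMod q, and let w : Fin m → ZMod q be arbitrary. Then there exists z ∈ ZMod q such that for every j, z · (h j) + w j ≠ 0 and z · (h j) + w j ≠ -1. -/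
/-- Per-block masking step of Lemma 1: if `2m < q` and all entries `h j` are
units of `ZMod q`, then some multiplier `z` shifts every coordinate
`z * h j + w j` away from both `0` and `-1`. -/
theorem exists_block_masking_multiplier (q m : ℕ) (hq : 2 ≤ q) (hm : 2 * m < q)
    (h w : Fin m → ZMod q) (hinv : ∀ j, IsUnit (h j)) :
    ∃ z : ZMod q, ∀ j, z * h j + w j ≠ 0 ∧ z * h j + w j ≠ -1 := by
  haveI : NeZero q := ⟨by omega⟩
  classical
  set B : Finset (ZMod q) :=
    Finset.univ.biUnion (fun j => {(-w j) * (h j)⁻¹, (-1 - w j) * (h j)⁻¹}) with hB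
  have hcard : B.card ≤ 2 * m := by
    calc B.card ≤ ∑ j : Fin m,
        ({(-w j) * (h j)⁻¹, (-1 - w j) * (h j)⁻¹} : Finset (ZMod q)).card :=
          Finset.card_biUnion_le
      _ ≤ ∑ _j : Fin m, 2 := Finset.sum_le_sum (fun j _ =>
          (Finset.card_insert_le _ _).trans (by simp))
      _ = 2 * m := by simp [mul_comm]
  obtain ⟨z, hz⟩ : ∃ z : ZMod q, z ∉ B := by
    by_contra hc
    push_neg at hc
    have h1 : (Finset.univ : Finset (ZMod q)).card ≤ B.card :=
      Finset.card_le_card (fun x _ => hc x)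
    rw [Finset.card_univ, ZMod.card] at h1
    omega
  refine ⟨z, fun j => ?_⟩
  have hmem : z ∉ ({(-w j) * (h j)⁻¹, (-1 - w j) * (h j)⁻¹} : Finset (ZMod q)) := by
    intro hmem
    exact hz (Finset.mem_biUnion.mpr ⟨j, Finset.mem_univ j, hmem⟩)
  simp only [Finset.mem_insert, Finset.mem_singleton, not_or] at hmem
  have hu : h j * (h j)⁻¹ = 1 := ZMod.mul_inv_of_unit _ (hinv j)
  constructor
  · intro he
    apply hmem.1
    have : z * h j = -w j := by linear_combination he
    calc z = z * (h j * (h j)⁻¹) := by rw [hu, mul_one]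
      _ = (z * h j) * (h j)⁻¹ := by ring
      _ = (-w j) * (h j)⁻¹ := by rw [this]
  · intro he
    apply hmem.2
    have : z * h j = -1 - w j := by linear_combination he
    calc z = z * (h j * (h j)⁻¹) := by rw [hu, mul_one]
      _ = (z * h j) * (h j)⁻¹ := by ring
      _ = (-1 - w j) * (h j)⁻¹ := by rw [this]
end

section
/- Let q ≥ 2 and n be natural numbers, let x ∈ ZMod q with x ≠ 0, let φ be a subset of {0,...,n-1} with 2 · |φ| ≤ q - 1, and let w : Fin n → ZMod q be any vector. Then there exists z₀ ∈ ZMod q such that for every i ∈ φ the masked symbol c_i := w i - z₀ satisfies c_i ≠ 0 and c_i ≠ -x; consequently, for every i ∈ φ and every e ∈ {0, x} ⊆ ZMod q, one has c_i + e ≠ 0. -/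
/-- Remark 2: the masking scheme extends to error values `e ∈ {0, x}` for an
arbitrary fixed nonzero `x`: if `2 * |φ| ≤ q - 1`, there exists `z₀` such that
the masked symbols `c_i = w i - z₀` at positions `i ∈ φ` avoid `0` and `-x`,
hence `c_i + e ≠ 0` for every `e ∈ {0, x}`. -/
theorem exists_masking_shift_general (q n : ℕ) (hq : 2 ≤ q) (x : ZMod q)
    (hx : x ≠ 0) (φ : Finset (Fin n)) (hφ : 2 * φ.card ≤ q - 1)
    (w : Fin n → ZMod q) :
    ∃ z₀ : ZMod q, ∀ i ∈ φ,
      (w i - z₀ ≠ 0 ∧ w i - z₀ ≠ -x) ∧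
      ∀ e : ZMod q, (e = 0 ∨ e = x) → (w i - z₀) + e ≠ 0 := by
  haveI : NeZero q := ⟨by omega⟩
  set B : Finset (ZMod q) := φ.image w ∪ φ.image (fun i => w i + x) with hB
  have hcard : B.card < q := by
    calc B.card ≤ (φ.image w).card + (φ.image (fun i => w i + x)).card :=
          Finset.card_union_le _ _
      _ ≤ φ.card + φ.card := Nat.add_le_add (Finset.card_image_le) (Finset.card_image_le)
      _ < q := by omega
  obtain ⟨z₀, hz₀⟩ : ∃ z₀ : ZMod q, z₀ ∉ B := by
    by_contra h
    push_neg at h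
    have : (Finset.univ : Finset (ZMod q)).card ≤ B.card :=
      Finset.card_le_card (fun z _ => h z)
    rw [Finset.card_univ, ZMod.card] at this
    omega
  refine ⟨z₀, fun i hi => ?_⟩
  have h1 : w i - z₀ ≠ 0 := by
    intro h
    exact hz₀ (Finset.mem_union_left _ (Finset.mem_image.2 ⟨i, hi, by
      have : z₀ = w i := by linear_combination -h
      exact this.symm⟩))
  have h2 : w i - z₀ ≠ -x := by
    intro h
    exact hz₀ (Finset.mem_union_right _ (Finset.mem_image.2 ⟨i, hi, by
      linear_combination h⟩))
  exact ⟨⟨h1, h2⟩, fun e he => by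
    rcases he with rfl | rfl
    · simpa using h1
    · intro h; exact h2 (by linear_combination h)⟩
end
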